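/- The Čech complex Ω_• in persistence modules over ℤⁿ is a flat resolution of I(−𝟙), where 𝟙 = (1,…,1): the homology H_d(Ω_•) vanishes for all d > 0, and the augmentation morphism ε : Ω_0 = F(e_{{1,…,n}}) → I(−𝟙), whose component at each z ∈ ℤⁿ with z ≤ −𝟙 is the identity of k (and which is zero at all other z), is surjective and induces an isomorphism H_0(Ω_•) ≅ I(−𝟙). Equivalently, the augmented complex 0 → Ω_n → Ω_{n−1} → ⋯ → Ω_0 → I(−𝟙) → 0 is exact. -/

import Mathlib

/-!
STATEMENT 10: The Čech complex `Ω_•` of persistence modules over `ℤⁿ` is a flat resolution of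
`I(−𝟙)`: the augmented complex `0 → Ω_n → ⋯ → Ω_0 → I(−𝟙) → 0` is exact.

Persistence modules over `ℤⁿ` are formalized as functors `(Fin n → ℤ) ⥤ ModuleCat k`.
`F(a)` (for `a ∈ (ℤ ∪ {−∞})ⁿ`) is realized gradewise as the submodule
`gate k P = {x : k | P ∨ x = 0}` of `k` (which is `k` if `P` holds and `0` otherwise), and
`I(−𝟙)` is realized gradewise as the quotient `k ⧸ gate k (¬ P)` (which is `k` iff `v ≤ −𝟙`),
with the canonical structure maps.  Exactness is expressed componentwise (kernels, images and
exactness of persistence modules are computed gradewise).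
-/

open CategoryTheory Limits

attribute [-instance] CategoryTheory.pi

noncomputable instance (k : Type) [Field k] (n : ℕ) :
    HasFiniteBiproducts ((Fin n → ℤ) ⥤ ModuleCat k) :=
  @Abelian.hasFiniteBiproducts _ _ inferInstance

variable (k : Type) [Field k]

/-- The submodule `{x : k | P ∨ x = 0}` of `k`: it is all of `k` if `P` holds, and `0` otherwise. -/
def gate (P : Prop) : Submodule k k where
  carrier := {x | P ∨ x = 0}
  add_mem' := by
    rintro a b (h | ha) hb
    · exact Or.inl h
    · rcases hb with h | hb
      · exact Or.inl h
      · exact Or.inr (by rw [ha, hb, add_zero])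
  zero_mem' := Or.inr rfl
  smul_mem' := by
    rintro c x (h | hx)
    · exact Or.inl h
    · exact Or.inr (by rw [hx, smul_zero])

lemma gate_mono {P Q : Prop} (h : P → Q) : gate k P ≤ gate k Q := fun _ hx => hx.imp h id

/-- Inclusion of gates. -/
def gateHom {P Q : Prop} (h : P → Q) : ↥(gate k P) →ₗ[k] ↥(gate k Q) :=
  Submodule.inclusion (gate_mono k h)

variable (n : ℕ)

/-- The flat persistence module `F(a)`, `a ∈ (ℤ ∪ {−∞})ⁿ`:
`F(a)_v = k` if `a ≤ v` and `0` otherwise, with identity structure maps between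
nonzero components. -/
def flatF (a : Fin n → WithBot ℤ) : (Fin n → ℤ) ⥤ ModuleCat k where
  obj v := ModuleCat.of k (gate k (∀ i, a i ≤ ((v i : ℤ) : WithBot ℤ)))
  map {v w} h := ModuleCat.ofHom (gateHom k (fun hc i => le_trans (hc i) (WithBot.coe_le_coe.mpr (leOfHom h i))))
  map_id := fun _ => rfl
  map_comp := fun _ _ => rfl

/-- The injective persistence module `I(−𝟙)`:  `I(−𝟙)_v = k` if `v ≤ −𝟙` and `0` otherwise,
with identity structure maps between nonzero components (realized gradewise as a quotient
of `k`). -/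
def injNegOne : (Fin n → ℤ) ⥤ ModuleCat k where
  obj v := ModuleCat.of k (k ⧸ gate k (¬ ∀ i, v i ≤ -1))
  map {v w} h := ModuleCat.ofHom (Submodule.mapQ _ _ LinearMap.id
    (gate_mono k (fun hv hw => hv (fun i => le_trans (leOfHom h i) (hw i)))))
  map_id v := ModuleCat.hom_ext (Submodule.linearMap_qext _ rfl)
  map_comp f g := ModuleCat.hom_ext (Submodule.linearMap_qext _ rfl)

/-- `e_Q ∈ (ℤ ∪ {−∞})ⁿ`: the vector whose `i`-th entry is `−∞` if `i ∈ Q` and `0` otherwise. -/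
def eQ (Q : Finset (Fin n)) : Fin n → WithBot ℤ := fun i => if i ∈ Q then ⊥ else 0

/-- The canonical inclusion `F(e_Q) ⟶ F(e_{Q'})` for `Q ⊆ Q'`. -/
def natInc {Q Q' : Finset (Fin n)} (h : Q ⊆ Q') : flatF k n (eQ n Q) ⟶ flatF k n (eQ n Q') where
  app v := ModuleCat.ofHom (gateHom k (fun hc i => by
    by_cases hi : i ∈ Q'
    · simp [eQ, hi]
    · have hiQ : i ∉ Q := fun hq => hi (h hq)
      have := hc i
      simpa [eQ, hi, hiQ] using this))
  naturality := fun _ _ _ => rfl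

/-- Indexing set of the degree-`d` part of the Čech complex: subsets `Q ⊆ {1,…,n}`
with `|Q| = n − d` (for `d > n` this is empty, so `Ω_d = 0`). -/
abbrev cechIdx (d : ℕ) := {Q : Finset (Fin n) // Q.card + d = n}

/-- The degree-`d` component `Ω_d = ⊕_{|Q| = n−d} F(e_Q)` of the Čech complex. -/
noncomputable def cechObj (d : ℕ) : (Fin n → ℤ) ⥤ ModuleCat k :=
  ⨁ (fun Q : cechIdx n d => flatF k n (eQ n Q.1))

/-- The boundary `κ_{d+1} : Ω_{d+1} ⟶ Ω_d` of the Čech complex: its component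
`F(e_Q) ⟶ F(e_{Q'})` is `(−1)^m` times the canonical inclusion when `Q ⊆ Q'`
(where, `Q'` being `Q ∪ {q}`, `m` is the number of elements of `Q'` strictly smaller
than `q`), and `0` otherwise. -/
noncomputable def cechD (d : ℕ) : cechObj k n (d+1) ⟶ cechObj k n d :=
  biproduct.matrix fun Q Q' =>
    if h : Q.1 ⊆ Q'.1 then
      (((-1 : ℤ) ^ ((Q'.1.filter (fun x => ∃ q ∈ Q'.1 \ Q.1, x < q)).card)) • natInc k n h)
    else 0

/-- The augmentation component `F(e_Q) ⟶ I(−𝟙)` whose component at each grade `v` with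
`v ≤ −𝟙` is the identity of `k` (and which is zero at all other grades). -/
noncomputable def epsComp (Q : Finset (Fin n)) : flatF k n (eQ n Q) ⟶ injNegOne k n where
  app v := ModuleCat.ofHom ((Submodule.mkQ _).comp (Submodule.subtype _))
  naturality := fun _ _ _ => rfl

/-- The augmentation morphism `ε : Ω_0 ⟶ I(−𝟙)`. -/
noncomputable def cechEps : cechObj k n 0 ⟶ injNegOne k n :=
  biproduct.desc fun Q => epsComp k n Q.1

/-!
At a grade `v`, `Ω_d(v)` has one copy of `k` for each `Q` with `|Q| = n - d` and `v i ≥ 0` for all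
`i ∉ Q`. Recording these coordinates turns `κ` into the coboundary
`δ f R = ∑_{q ∈ R} ± f (R \ {q})` on functions of subsets, the sign being that of inserting `q`.
If `v ≤ -𝟙`, only `Q = {1,…,n}` survives: `Ω(v)` is `k` in degree `0` and `ε_v` is the identity.
Otherwise some `v q₀ ≥ 0`, so `ε_v = 0`, and the cone `(h f) Q = ± f (Q ∪ {q₀})` (for `q₀ ∉ Q`)
respects these supports and satisfies `δ h + h δ = id`, which makes the complex exact at `v`.
-/

namespace CechComplex

open Finset

section Simplex

variable {ι R : Type*} [LinearOrder ι] [CommRing R]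

def insertSign (P : Finset ι) (q : ι) : R := (-1) ^ #{x ∈ P | x < q}

lemma insertSign_mul_self (P : Finset ι) (q : ι) :
    insertSign P q * insertSign P q = (1 : R) := by
  rw [insertSign, ← pow_add, ← two_mul, pow_mul, neg_one_sq, one_pow]

lemma card_filter_lt_insert {P : Finset ι} {p : ι} (hp : p ∉ P) (q : ι) :
    #{x ∈ insert p P | x < q} = #{x ∈ P | x < q} + if p < q then 1 else 0 := by
  rw [filter_insert]
  split_ifs
  · exact card_insert_of_notMem (fun h => hp (mem_of_mem_filter _ h))
  · rfl

lemma insertSign_insert_mul {P : Finset ι} {p q : ι} (hp : p ∉ P) (hq : q ∉ P) (hpq : p ≠ q) :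
    insertSign (insert p P) q * insertSign P p
      = -(insertSign (insert q P) p * insertSign P q : R) := by
  simp only [insertSign, card_filter_lt_insert hp, card_filter_lt_insert hq]
  rcases hpq.lt_or_gt with h | h
  · rw [if_pos h, if_neg (asymm h)]; ring
  · rw [if_neg (asymm h), if_pos h]; ring

lemma insertSign_mul_insertSign {P : Finset ι} {p q : ι} (hp : p ∉ P) (hq : q ∉ P)
    (hpq : p ≠ q) :
    insertSign P p * insertSign P q
      = -(insertSign (insert p P) q * insertSign (insert q P) p : R) := by
  simp only [insertSign, card_filter_lt_insert hp, card_filter_lt_insert hq]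
  rcases hpq.lt_or_gt with h | h
  · rw [if_pos h, if_neg (asymm h)]; ring
  · rw [if_neg (asymm h), if_pos h]; ring

def coboundary (f : Finset ι → R) (S : Finset ι) : R :=
  ∑ q ∈ S, insertSign (S.erase q) q * f (S.erase q)

def cone (q₀ : ι) (f : Finset ι → R) (S : Finset ι) : R :=
  if q₀ ∈ S then 0 else insertSign S q₀ * f (insert q₀ S)

lemma coboundary_coboundary (f : Finset ι → R) : coboundary (coboundary f) = 0 := by
  funext S
  simp only [coboundary, mul_sum, Pi.zero_apply]
  rw [sum_sigma']
  refine sum_involution (fun z _ => ⟨z.2, z.1⟩) ?_ ?_ ?_ ?_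
  · rintro ⟨q, p⟩ hz
    obtain ⟨hq, hp⟩ := mem_sigma.mp hz
    obtain ⟨hpq, hpS⟩ := mem_erase.mp hp
    simp only
    set P := (S.erase q).erase p
    have hP : (S.erase p).erase q = P := erase_right_comm
    have hpP : p ∉ P := notMem_erase p _
    have hqP : q ∉ P := fun h => notMem_erase q S (mem_of_mem_erase h)
    have h1 : S.erase q = insert p P := (insert_erase hp).symm
    have h2 : S.erase p = insert q P := by
      rw [← hP, insert_erase (mem_erase.mpr ⟨hpq.symm, hq⟩)]
    rw [hP, h1, h2]
    linear_combination f P * insertSign_insert_mul (R := R) hpP hqP hpq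
  · rintro ⟨q, p⟩ hz _ h
    exact (mem_erase.mp (mem_sigma.mp hz).2).1 (congrArg Sigma.fst h)
  · rintro ⟨q, p⟩ hz
    obtain ⟨hq, hp⟩ := mem_sigma.mp hz
    exact mem_sigma.mpr ⟨mem_of_mem_erase hp, mem_erase.mpr ⟨(mem_erase.mp hp).1.symm, hq⟩⟩
  · intro z _
    rfl

lemma coboundary_cone_add_cone_coboundary (q₀ : ι) (f : Finset ι → R) (S : Finset ι) :
    coboundary (cone q₀ f) S + cone q₀ (coboundary f) S = f S := by
  by_cases h₀ : q₀ ∈ S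
  · rw [cone, if_pos h₀, add_zero, coboundary, sum_eq_single q₀]
    · rw [cone, if_neg (notMem_erase q₀ S), insert_erase h₀, ← mul_assoc,
        insertSign_mul_self, one_mul]
    · intro q _ hq
      rw [cone, if_pos (mem_erase.mpr ⟨fun h => hq h.symm, h₀⟩), mul_zero]
    · exact fun h => absurd h₀ h
  · have hterm : ∀ q ∈ S, insertSign (S.erase q) q * cone q₀ f (S.erase q)
        = -(insertSign S q₀ * (insertSign ((insert q₀ S).erase q) q
            * f ((insert q₀ S).erase q))) := by
      intro q hq
      have hq₀ : q₀ ∉ S.erase q := fun h => h₀ (mem_of_mem_erase h)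
      have hne : q ≠ q₀ := fun h => h₀ (h ▸ hq)
      have hsign := insertSign_mul_insertSign (R := R) (notMem_erase q S) hq₀ hne
      rw [insert_erase hq] at hsign
      rw [cone, if_neg hq₀, erase_insert_of_ne hne.symm]
      linear_combination f (insert q₀ (S.erase q)) * hsign
    rw [coboundary, sum_congr rfl hterm, sum_neg_distrib, ← mul_sum, cone, if_neg h₀,
      coboundary, sum_insert h₀, erase_insert h₀]
    linear_combination f S * insertSign_mul_self (R := R) S q₀

end Simplex

section Grade

variable {k n}

lemma mem_gate_iff {P : Prop} {x : k} : x ∈ gate k P ↔ P ∨ x = 0 := Iff.rfl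

lemma eQ_le_iff {v : Fin n → ℤ} {Q : Finset (Fin n)} :
    (∀ i, eQ n Q i ≤ ((v i : ℤ) : WithBot ℤ)) ↔ ∀ i ∉ Q, 0 ≤ v i := by
  refine forall_congr' fun i => ?_
  by_cases hi : i ∈ Q <;> simp [eQ, hi]

noncomputable def cechι {d : ℕ} (P : cechIdx n d) : flatF k n (eQ n P.1) ⟶ cechObj k n d :=
  biproduct.ι (fun Q : cechIdx n d => flatF k n (eQ n Q.1)) P

noncomputable def cechπ {d : ℕ} (P : cechIdx n d) : cechObj k n d ⟶ flatF k n (eQ n P.1) :=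
  biproduct.π (fun Q : cechIdx n d => flatF k n (eQ n Q.1)) P

variable (v : Fin n → ℤ)

def flatVal (a : Fin n → WithBot ℤ) : (flatF k n a).obj v →ₗ[k] k := (gate k _).subtype

lemma flatVal_injective (a : Fin n → WithBot ℤ) : Function.Injective (flatVal (k := k) v a) :=
  Subtype.val_injective

noncomputable def cechCoord (d : ℕ) (Q : Finset (Fin n)) : (cechObj k n d).obj v →ₗ[k] k :=
  if h : Q.card + d = n then flatVal v _ ∘ₗ ((cechπ ⟨Q, h⟩).app v).hom else 0

variable {v}

lemma cechCoord_of_card_ne {d : ℕ} {Q : Finset (Fin n)} (h : Q.card + d ≠ n) :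
    cechCoord (k := k) v d Q = 0 :=
  dif_neg h

lemma cechCoord_val {d : ℕ} (Q : cechIdx n d) (x : (cechObj k n d).obj v) :
    cechCoord v d Q.1 x = flatVal v _ ((cechπ Q).app v x) := by
  rw [cechCoord, dif_pos Q.2]
  rfl

lemma cechCoord_ne_zero {d : ℕ} {Q : Finset (Fin n)} {x : (cechObj k n d).obj v}
    (hx : cechCoord v d Q x ≠ 0) : Q.card + d = n ∧ ∀ i ∉ Q, 0 ≤ v i := by
  by_cases h : Q.card + d = n
  · rw [cechCoord_val ⟨Q, h⟩] at hx
    exact ⟨h, eQ_le_iff.mp ((mem_gate_iff.mp ((cechπ ⟨Q, h⟩).app v x).2).resolve_right hx)⟩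
  · rw [cechCoord_of_card_ne h, LinearMap.zero_apply] at hx
    exact absurd rfl hx

lemma cechι_cechπ_self {d : ℕ} (P : cechIdx n d) :
    cechι P ≫ cechπ P = 𝟙 (flatF k n (eQ n P.1)) :=
  biproduct.ι_π_self _ _

lemma cechι_cechπ_of_ne {d : ℕ} {P Q : cechIdx n d} (h : P ≠ Q) :
    cechι P ≫ cechπ Q = (0 : flatF k n (eQ n P.1) ⟶ _) :=
  biproduct.ι_π_ne _ h

lemma cechCoord_cechι {d : ℕ} (Q : Finset (Fin n)) (P : cechIdx n d)
    (y : gate k (∀ i, eQ n P.1 i ≤ ((v i : ℤ) : WithBot ℤ))) :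
    cechCoord v d Q ((cechι P).app v y) = if Q = P.1 then y.1 else 0 := by
  by_cases h : Q.card + d = n
  · rw [cechCoord_val ⟨Q, h⟩]
    split_ifs with hQ
    · obtain rfl : (⟨Q, h⟩ : cechIdx n d) = P := Subtype.ext hQ
      exact congrArg (flatVal v _) (congrArg (fun f => (f.app v).hom y) (cechι_cechπ_self _))
    · have hP : P ≠ ⟨Q, h⟩ := fun hP => hQ (congrArg Subtype.val hP).symm
      exact congrArg (flatVal v _) (congrArg (fun f => (f.app v).hom y) (cechι_cechπ_of_ne hP))
  · rw [cechCoord_of_card_ne h, if_neg (fun hQ : Q = P.1 => h (hQ ▸ P.2)), LinearMap.zero_apply]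

lemma eq_sum_cechι_cechπ {d : ℕ} (x : (cechObj k n d).obj v) :
    x = ∑ Q, (cechι Q).app v ((cechπ Q).app v x) := by
  have h := congrArg (fun f => (f.app v).hom x)
    (biproduct.total (f := fun Q : cechIdx n d => flatF k n (eQ n Q.1)))
  simp only [NatTrans.app_sum, NatTrans.id_app, NatTrans.comp_app, ModuleCat.hom_sum,
    ModuleCat.hom_id, ModuleCat.hom_comp] at h
  erw [LinearMap.sum_apply] at h
  exact h.symm

lemma cechCoord_ext {d : ℕ} {x y : (cechObj k n d).obj v}
    (h : ∀ Q, cechCoord v d Q x = cechCoord v d Q y) : x = y := by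
  rw [eq_sum_cechι_cechπ x, eq_sum_cechι_cechπ y]
  refine sum_congr rfl fun Q _ => congrArg _ (flatVal_injective v _ ?_)
  rw [← cechCoord_val, ← cechCoord_val, h]

lemma exists_cechCoord_eq {d : ℕ} (f : Finset (Fin n) → k)
    (hf : ∀ Q, f Q ≠ 0 → Q.card + d = n ∧ ∀ i ∉ Q, 0 ≤ v i) :
    ∃ x : (cechObj k n d).obj v, (fun Q => cechCoord v d Q x) = f := by
  have hgate (P : cechIdx n d) : f P.1 ∈ gate k (∀ i, eQ n P.1 i ≤ ((v i : ℤ) : WithBot ℤ)) := by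
    by_cases hP : f P.1 = 0
    · exact mem_gate_iff.mpr (Or.inr hP)
    · exact mem_gate_iff.mpr (Or.inl (eQ_le_iff.mpr (hf P.1 hP).2))
  refine ⟨∑ P, (cechι P).app v ⟨f P.1, hgate P⟩, funext fun Q => ?_⟩
  rw [map_sum]
  by_cases hQ : Q.card + d = n
  · rw [sum_eq_single ⟨Q, hQ⟩]
    · rw [cechCoord_cechι, if_pos rfl]
    · intro P _ hP
      rw [cechCoord_cechι, if_neg fun h => hP (Subtype.ext h.symm)]
    · exact fun h => absurd (mem_univ _) h
  · rw [cechCoord_of_card_ne hQ]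
    simp only [LinearMap.zero_apply, sum_const_zero]
    exact (not_imp_comm.mp (fun h => (hf Q h).1) hQ).symm

end Grade

section Boundary

variable {k n}

lemma card_filter_exists_lt_sdiff_erase {R : Finset (Fin n)} {q : Fin n} (hq : q ∈ R) :
    #{x ∈ R | ∃ p ∈ R \ R.erase q, x < p} = #{x ∈ R.erase q | x < q} := by
  rw [sdiff_erase_self hq]
  congr 1
  ext x
  simp only [mem_filter, mem_singleton, exists_eq_left, mem_erase]
  exact ⟨fun h => ⟨⟨h.2.ne, h.1⟩, h.2⟩, fun h => ⟨h.1.2, h.2⟩⟩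

lemma sum_cechIdx_subset {d : ℕ} {R : Finset (Fin n)} (hR : R.card + d = n)
    (g : Finset (Fin n) → k) :
    ∑ Q : cechIdx n (d + 1), (if Q.1 ⊆ R then g Q.1 else 0) = ∑ q ∈ R, g (R.erase q) := by
  symm
  refine sum_bij_ne_zero (fun q hq _ => ⟨R.erase q, by rw [card_erase_of_mem hq]; grind⟩)
    (fun _ _ _ => mem_univ _)
    (fun q₁ h₁ _ q₂ h₂ _ h => erase_injOn R h₁ h₂ (congrArg Subtype.val h))
    ?_ (fun q _ _ => by simp only [if_pos (erase_subset q R)])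
  intro Q _ hQ
  have hQR : Q.1 ⊆ R := by by_contra h; exact hQ (if_neg h)
  obtain ⟨q, hqQ, rfl⟩ := exists_eq_insert_iff.mpr ⟨hQR, by have := Q.2; omega⟩
  refine ⟨q, mem_insert_self q Q.1, ?_, Subtype.ext (erase_insert hqQ)⟩
  rw [erase_insert hqQ]
  rwa [if_pos hQR] at hQ

variable (v : Fin n → ℤ)

lemma cechD_comp_cechπ (d : ℕ) (R : cechIdx n d) :
    cechD k n d ≫ cechπ R = ∑ Q, cechπ Q ≫ (if h : Q.1 ⊆ R.1 then
      ((-1 : ℤ) ^ #{x ∈ R.1 | ∃ q ∈ R.1 \ Q.1, x < q}) • natInc k n h else 0) :=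
  (biproduct.matrix_π _ _).trans biproduct.desc_eq

lemma cechCoord_cechD (d : ℕ) (x : (cechObj k n (d + 1)).obj v) :
    (fun R => cechCoord v d R ((cechD k n d).app v x))
      = coboundary (fun Q => cechCoord v (d + 1) Q x) := by
  funext R
  by_cases hR : R.card + d = n
  · have hterm : ∀ Q : cechIdx n (d + 1),
        flatVal v _ (((cechπ Q ≫ (if h : Q.1 ⊆ R then
          ((-1 : ℤ) ^ #{x ∈ R | ∃ q ∈ R \ Q.1, x < q}) • natInc k n h else 0)).app v) x)
        = if Q.1 ⊆ R then
            ((-1 : k) ^ #{x ∈ R | ∃ q ∈ R \ Q.1, x < q}) * cechCoord v (d + 1) Q.1 x else 0 := by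
      intro Q
      rw [cechCoord_val]
      split_ifs with h
      · simp only [NatTrans.comp_app, NatTrans.app_zsmul, ModuleCat.comp_apply, ModuleCat.hom_zsmul,
          LinearMap.smul_apply, map_zsmul, zsmul_eq_mul]
        push_cast
        rfl
      · rfl
    rw [cechCoord_val ⟨R, hR⟩, ← ModuleCat.comp_apply, ← NatTrans.comp_app, cechD_comp_cechπ,
      NatTrans.app_sum]
    simp only [ModuleCat.hom_sum, LinearMap.coe_sum, Finset.sum_apply, map_sum]
    rw [sum_congr rfl fun Q _ => hterm Q, sum_cechIdx_subset hR
      (fun P => (-1 : k) ^ #{x ∈ R | ∃ q ∈ R \ P, x < q} * cechCoord v (d + 1) P x), coboundary]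
    refine sum_congr rfl fun q hq => ?_
    rw [card_filter_exists_lt_sdiff_erase hq, insertSign]
  · rw [cechCoord_of_card_ne hR, LinearMap.zero_apply, coboundary]
    refine (sum_eq_zero fun q hq => ?_).symm
    rw [cechCoord_of_card_ne (by rw [card_erase_of_mem hq]; grind), LinearMap.zero_apply,
      mul_zero]

end Boundary

section Exactness

variable {k n} {v : Fin n → ℤ}

lemma cechD_cechD_apply (d : ℕ) (x : (cechObj k n (d + 2)).obj v) :
    (cechD k n d).app v ((cechD k n (d + 1)).app v x) = 0 :=
  cechCoord_ext fun R => by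
    rw [congrFun (cechCoord_cechD v d _) R, cechCoord_cechD, coboundary_coboundary, map_zero]
    rfl

lemma cechObj_succ_eq_zero (hv : ∀ i, v i ≤ -1) {d : ℕ} (x : (cechObj k n (d + 1)).obj v) :
    x = 0 :=
  cechCoord_ext fun Q => by
    rw [map_zero]
    by_contra hx
    obtain ⟨hQ, hpos⟩ := cechCoord_ne_zero hx
    obtain ⟨i, hi⟩ : ∃ i, i ∉ Q := by
      by_contra! h
      rw [eq_univ_iff_forall.mpr h, card_univ, Fintype.card_fin] at hQ
      omega
    have := hv i
    have := hpos i hi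
    omega

lemma cechCoord_zero_eq_zero_of_ne_univ {Q : Finset (Fin n)} (hQ : Q ≠ univ)
    (x : (cechObj k n 0).obj v) : cechCoord v 0 Q x = 0 := by
  refine LinearMap.congr_fun (cechCoord_of_card_ne fun h => hQ ?_) x
  exact eq_univ_of_card Q (h.trans (Fintype.card_fin n).symm)

lemma coboundary_cechCoord_zero (x : (cechObj k n 0).obj v) :
    coboundary (fun Q => cechCoord v 0 Q x) = 0 :=
  funext fun S => sum_eq_zero fun q _ => mul_eq_zero_of_right _ <|
    cechCoord_zero_eq_zero_of_ne_univ (ne_of_mem_of_not_mem' (mem_univ q) (notMem_erase q S)).symm x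

lemma exists_cechD_eq_of_coboundary_eq_zero {q₀ : Fin n} (hq₀ : 0 ≤ v q₀) {e : ℕ}
    (x : (cechObj k n e).obj v) (hx : coboundary (fun Q => cechCoord v e Q x) = 0) :
    ∃ y, (cechD k n e).app v y = x := by
  set f := fun Q => cechCoord v e Q x
  obtain ⟨y, hy⟩ := exists_cechCoord_eq (d := e + 1) (cone q₀ f) fun Q hQ => by
    simp only [cone, ne_eq, ite_eq_left_iff, Classical.not_imp, mul_eq_zero, not_or] at hQ
    obtain ⟨hq₀Q, -, hfQ⟩ := hQ
    obtain ⟨hcard, hpos⟩ := cechCoord_ne_zero hfQ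
    refine ⟨by rw [card_insert_of_notMem hq₀Q] at hcard; omega, fun i hi => ?_⟩
    by_cases hiq : i = q₀
    · exact hiq ▸ hq₀
    · exact hpos i (by simp [hi, hiq])
  refine ⟨y, cechCoord_ext fun R => ?_⟩
  have hR := coboundary_cone_add_cone_coboundary q₀ f R
  simp only [hx, cone, Pi.zero_apply, mul_zero, ite_self, add_zero] at hR
  rw [congrFun (cechCoord_cechD v e y) R, hy, hR]

lemma cechEps_eq_sum : cechEps k n = ∑ Q : cechIdx n 0, cechπ Q ≫ epsComp k n Q.1 :=
  biproduct.desc_eq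

lemma cechEps_app (x : (cechObj k n 0).obj v) :
    (cechEps k n).app v x = Submodule.Quotient.mk (cechCoord v 0 univ x) := by
  rw [cechEps_eq_sum, NatTrans.app_sum]
  simp only [ModuleCat.hom_sum, LinearMap.coe_sum, Finset.sum_apply]
  rw [sum_eq_single ⟨univ, by simp⟩]
  · exact congrArg _ (cechCoord_val ⟨univ, _⟩ x).symm
  · intro Q _ hQ
    exact absurd (Subtype.ext (eq_univ_of_card Q.1 (by simpa using Q.2))) hQ
  · exact fun h => absurd (mem_univ _) h

lemma cechEps_app_eq_zero_iff (x : (cechObj k n 0).obj v) :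
    (cechEps k n).app v x = 0 ↔ (¬∀ i, v i ≤ -1) ∨ cechCoord v 0 univ x = 0 := by
  rw [cechEps_app]
  exact Submodule.Quotient.mk_eq_zero _

lemma cechEps_cechD_apply (x : (cechObj k n 1).obj v) :
    (cechEps k n).app v ((cechD k n 0).app v x) = 0 := by
  by_cases hv : ∀ i, v i ≤ -1
  · rw [cechObj_succ_eq_zero hv x, map_zero, map_zero]
  · exact (cechEps_app_eq_zero_iff _).mpr (Or.inl hv)

lemma cechEps_app_surjective : Function.Surjective ((cechEps k n).app v) := by
  intro y
  obtain ⟨a, rfl⟩ := Submodule.Quotient.mk_surjective _ y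
  obtain ⟨x, hx⟩ := exists_cechCoord_eq (v := v) (d := 0) (fun Q => if Q = univ then a else 0)
    fun Q hQ => by
      obtain rfl : Q = univ := by by_contra h; exact hQ (if_neg h)
      simp
  refine ⟨x, ?_⟩
  rw [cechEps_app, congrFun hx univ, if_pos rfl]

lemma exists_nonneg_of_not_le (hv : ¬∀ i, v i ≤ -1) : ∃ q₀, 0 ≤ v q₀ := by
  push Not at hv
  obtain ⟨i, hi⟩ := hv
  exact ⟨i, by omega⟩

lemma exact_cechD_zero_cechEps :
    Function.Exact ((cechD k n 0).app v) ((cechEps k n).app v) := by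
  intro y
  refine ⟨fun hy => ?_, fun ⟨x, hx⟩ => hx ▸ cechEps_cechD_apply x⟩
  by_cases hv : ∀ i, v i ≤ -1
  · refine ⟨0, (map_zero _).trans (cechCoord_ext fun Q => ?_)⟩
    rw [map_zero]
    by_cases hQ : Q = univ
    · rw [hQ, ((cechEps_app_eq_zero_iff y).mp hy).resolve_left (not_not_intro hv)]
    · exact (cechCoord_zero_eq_zero_of_ne_univ hQ y).symm
  · obtain ⟨q₀, hq₀⟩ := exists_nonneg_of_not_le hv
    exact exists_cechD_eq_of_coboundary_eq_zero hq₀ y (coboundary_cechCoord_zero y)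

lemma exact_cechD_succ_cechD (d : ℕ) :
    Function.Exact ((cechD k n (d + 1)).app v) ((cechD k n d).app v) := by
  intro y
  refine ⟨fun hy => ?_, fun ⟨x, hx⟩ => hx ▸ cechD_cechD_apply d x⟩
  by_cases hv : ∀ i, v i ≤ -1
  · exact ⟨0, by rw [map_zero, cechObj_succ_eq_zero hv y]⟩
  · obtain ⟨q₀, hq₀⟩ := exists_nonneg_of_not_le hv
    refine exists_cechD_eq_of_coboundary_eq_zero hq₀ y ?_
    rw [← cechCoord_cechD, hy]
    exact funext fun R => map_zero _

lemma cechD_comp_cechD (d : ℕ) : cechD k n (d + 1) ≫ cechD k n d = 0 := by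
  ext v x
  exact cechD_cechD_apply d x

lemma cechD_comp_cechEps : cechD k n 0 ≫ cechEps k n = 0 := by
  ext v x
  exact cechEps_cechD_apply x

end Exactness

end CechComplex

theorem statement10 :
    (∀ d : ℕ, cechD k n (d+1) ≫ cechD k n d = 0) ∧
    (cechD k n 0 ≫ cechEps k n = 0) ∧
    (∀ v : Fin n → ℤ, Function.Surjective ((cechEps k n).app v)) ∧
    (∀ v : Fin n → ℤ, Function.Exact ((cechD k n 0).app v) ((cechEps k n).app v)) ∧
    (∀ (d : ℕ) (v : Fin n → ℤ),
      Function.Exact ((cechD k n (d+1)).app v) ((cechD k n d).app v)) :=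
  ⟨CechComplex.cechD_comp_cechD, CechComplex.cechD_comp_cechEps,
    fun _ => CechComplex.cechEps_app_surjective, fun _ => CechComplex.exact_cechD_zero_cechEps,
    fun d _ => CechComplex.exact_cechD_succ_cechD d⟩
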